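/- arXiv:1805.11859 — 5 statements merged into one kernel-verified Lean document; each statement's English description precedes it below -/
import Mathlib

section
/- Fix ν > 0 and R > 0, and for C > 0 let Ω(C,ν) = { ω ∈ ℝⁿ : ∀ I ∈ ℤⁿ \ {0}, |(ω,I)| ≥ C/‖I‖^{n-1+ν} }. Then there exists a constant k = k(n,ν,R) such that the Lebesgue measure of B_R \ Ω(C,ν) is at most k·C, where B_R is the ball of radius R. -/
open MeasureTheory

/-- The set `Ω(C,ν)` of frequency vectors satisfying Kolmogorov's Diophantine
condition `K(C,ν)`. -/
def KolmogorovSet (n : ℕ) (C ν : ℝ) : Set (EuclideanSpace ℝ (Fin n)) :=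
  {ω | ∀ I : Fin n → ℤ, I ≠ 0 →
    C / (Real.sqrt (∑ i, ((I i : ℝ)) ^ 2)) ^ ((n : ℝ) - 1 + ν) ≤ |∑ i, ω i * (I i : ℝ)|}


/-!
A frequency `ω ∈ B_R` violating the condition for some `I ≠ 0` lies in the slab
`|⟪ω, I⟫| ≤ C ‖I‖^{-(n-1+ν)}`. Rotating `I / ‖I‖` onto a coordinate axis puts the part of that
slab inside `B_R` into a box of volume `2 C ‖I‖^{-(n+ν)} (2R)^{n-1}`, and summing over
`I ∈ ℤⁿ \ {0}` gives `k C`, because the lattice sum `∑ ‖I‖^{-(n+ν)}` converges for `ν > 0`.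
-/

open Module Metric

section Slab

variable {E : Type*} [NormedAddCommGroup E] [InnerProductSpace ℝ E] [FiniteDimensional ℝ E]

theorem exists_orthonormalBasis_apply_eq_of_norm_eq_one {u : E} (hu : ‖u‖ = 1) :
    ∃ (i₀ : Fin (finrank ℝ E)) (b : OrthonormalBasis (Fin (finrank ℝ E)) ℝ E), b i₀ = u := by
  have hpos : 0 < finrank ℝ E :=
    finrank_pos_iff_exists_ne_zero.mpr ⟨u, norm_ne_zero_iff.mp (by simp [hu])⟩
  let i₀ : Fin (finrank ℝ E) := ⟨0, hpos⟩
  have hon : Orthonormal ℝ (({i₀} : Set _).domRestrict fun _ => u) :=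
    orthonormal_subsingleton_iff.mpr fun _ => hu
  obtain ⟨b, hb⟩ := hon.exists_orthonormalBasis_extension_of_card_eq (by simp)
  exact ⟨i₀, b, hb i₀ rfl⟩

theorem volume_closedBall_inter_abs_inner_le [MeasurableSpace E] [BorelSpace E] {v : E}
    (hv : v ≠ 0) (R ε : ℝ) :
    volume (closedBall (0 : E) R ∩ {x | |inner ℝ x v| ≤ ε})
      ≤ ENNReal.ofReal (2 * (ε / ‖v‖)) * ENNReal.ofReal (2 * R) ^ (finrank ℝ E - 1) := by
  have hv' : 0 < ‖v‖ := norm_pos_iff.mpr hv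
  obtain ⟨i₀, b, hb⟩ :=
    exists_orthonormalBasis_apply_eq_of_norm_eq_one (norm_smul_inv_norm (𝕜 := ℝ) hv)
  set h : Fin (finrank ℝ E) → ℝ := Function.update (fun _ => R) i₀ (ε / ‖v‖) with hh
  have hbox : closedBall (0 : E) R ∩ {x | |inner ℝ x v| ≤ ε}
      ⊆ (fun x => (b.repr x).ofLp) ⁻¹' Set.Icc (-h) h := by
    rintro x ⟨hxR, hxv⟩
    have hcoord : ∀ i, |b.repr x i| ≤ h i := by
      intro i
      rw [b.repr_apply_apply]
      rcases eq_or_ne i i₀ with rfl | hi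
      · rw [hb, hh, Function.update_self, real_inner_smul_left, abs_mul, real_inner_comm,
          abs_of_nonneg (by positivity), inv_mul_eq_div]
        exact div_le_div_of_nonneg_right hxv hv'.le
      · rw [hh, Function.update_of_ne hi]
        calc |inner ℝ (b i) x| ≤ ‖b i‖ * ‖x‖ := abs_real_inner_le_norm _ _
          _ ≤ R := by simpa [b.orthonormal.1 i] using hxR
    exact ⟨fun i => neg_le_of_abs_le (hcoord i), fun i => le_of_abs_le (hcoord i)⟩
  have hmp : MeasurePreserving (fun x => (b.repr x).ofLp) volume volume :=
    (PiLp.volume_preserving_ofLp _).comp b.measurePreserving_repr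
  calc volume (closedBall (0 : E) R ∩ {x | |inner ℝ x v| ≤ ε})
      ≤ volume (Set.Icc (-h) h) :=
        (measure_mono hbox).trans_eq (hmp.measure_preimage measurableSet_Icc.nullMeasurableSet)
    _ = ∏ i, ENNReal.ofReal (2 * h i) := by
        rw [Real.volume_Icc_pi]; congr! 2; simp; ring
    _ = ENNReal.ofReal (2 * (ε / ‖v‖)) * ENNReal.ofReal (2 * R) ^ (finrank ℝ E - 1) := by
        rw [← Finset.mul_prod_erase _ _ (Finset.mem_univ i₀), hh, Function.update_self,
          Finset.prod_congr rfl fun i hi => by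
            rw [Function.update_of_ne (Finset.ne_of_mem_erase hi)],
          Finset.prod_const, Finset.card_erase_of_mem (Finset.mem_univ i₀), Finset.card_univ,
          Fintype.card_fin]

end Slab

section Lattice

variable {ι : Type*}

def latticePoint (I : ι → ℤ) : EuclideanSpace ℝ ι :=
  WithLp.toLp 2 fun i => (I i : ℝ)

theorem latticePoint_injective : Function.Injective (latticePoint (ι := ι)) := by
  intro I J h
  funext i
  simpa [latticePoint] using congrArg (· i) h

theorem latticePoint_ne_zero {I : ι → ℤ} (hI : I ≠ 0) : latticePoint I ≠ 0 := by
  intro h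
  exact hI (funext fun i => by simpa [latticePoint] using congrArg (· i) h)

variable [Fintype ι]

theorem norm_latticePoint (I : ι → ℤ) : ‖latticePoint I‖ = √(∑ i, (I i : ℝ) ^ 2) := by
  simp [latticePoint, EuclideanSpace.norm_eq]

theorem inner_latticePoint (ω : EuclideanSpace ℝ ι) (I : ι → ℤ) :
    inner ℝ ω (latticePoint I) = ∑ i, ω i * I i := by
  simp [latticePoint, PiLp.inner_apply, mul_comm]

theorem latticePoint_mem_span (I : ι → ℤ) :
    latticePoint I ∈ Submodule.span ℤ (Set.range (EuclideanSpace.basisFun ι ℝ).toBasis) := by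
  rw [Basis.mem_span_iff_repr_mem]
  intro i
  simp [latticePoint]

theorem summable_norm_latticePoint_rpow {r : ℝ} (hr : r < -Fintype.card ι) :
    Summable fun I : ι → ℤ => ‖latticePoint I‖ ^ r := by
  set L := Submodule.span ℤ (Set.range (EuclideanSpace.basisFun ι ℝ).toBasis)
  have hrank : finrank ℤ L = Fintype.card ι := by
    rw [ZLattice.rank ℝ L, finrank_euclideanSpace]
  exact (ZLattice.summable_norm_rpow L r (hrank ▸ hr)).comp_injective
    (i := fun I => (⟨latticePoint I, latticePoint_mem_span I⟩ : L))
    fun I J h => latticePoint_injective (congrArg Subtype.val h)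

end Lattice

def resonantZone (n : ℕ) (R C ν : ℝ) (I : Fin n → ℤ) : Set (EuclideanSpace ℝ (Fin n)) :=
  closedBall 0 R ∩ {ω | |inner ℝ ω (latticePoint I)| ≤ C / ‖latticePoint I‖ ^ ((n : ℝ) - 1 + ν)}

theorem closedBall_diff_kolmogorovSet_subset (n : ℕ) (R C ν : ℝ) :
    closedBall 0 R \ KolmogorovSet n C ν
      ⊆ ⋃ (I : Fin n → ℤ) (_ : I ≠ 0), resonantZone n R C ν I := by
  rintro ω ⟨hωR, hωK⟩
  simp only [KolmogorovSet, Set.mem_ofPred_eq, not_forall, not_le] at hωK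
  obtain ⟨I, hI, hlt⟩ := hωK
  refine Set.mem_iUnion₂.mpr ⟨I, hI, hωR, ?_⟩
  rw [Set.mem_ofPred_eq, inner_latticePoint, norm_latticePoint]
  exact hlt.le

theorem volume_resonantZone_le {n : ℕ} {R : ℝ} (hR : 0 ≤ R) (C ν : ℝ) {I : Fin n → ℤ}
    (hI : I ≠ 0) :
    volume (resonantZone n R C ν I)
      ≤ ENNReal.ofReal (2 * (2 * R) ^ (n - 1) * ‖latticePoint I‖ ^ (-((n : ℝ) + ν)) * C) := by
  have hv := latticePoint_ne_zero hI
  have hv' : 0 < ‖latticePoint I‖ := norm_pos_iff.mpr hv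
  have hwidth : C / ‖latticePoint I‖ ^ ((n : ℝ) - 1 + ν) / ‖latticePoint I‖
      = ‖latticePoint I‖ ^ (-((n : ℝ) + ν)) * C := by
    rw [div_div, ← Real.rpow_add_one hv'.ne', Real.rpow_neg hv'.le]
    ring_nf
  calc volume (resonantZone n R C ν I)
      ≤ ENNReal.ofReal (2 * (C / ‖latticePoint I‖ ^ ((n : ℝ) - 1 + ν) / ‖latticePoint I‖))
          * ENNReal.ofReal (2 * R) ^ (n - 1) := by
        simpa [resonantZone] using volume_closedBall_inter_abs_inner_le hv R
          (C / ‖latticePoint I‖ ^ ((n : ℝ) - 1 + ν))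
    _ = _ := by
        rw [hwidth, ← ENNReal.ofReal_pow (by positivity), ← ENNReal.ofReal_mul' (by positivity)]
        ring_nf

theorem stmt_5 (n : ℕ) (ν R : ℝ) (hν : 0 < ν) (hR : 0 < R) :
    ∃ k : ℝ, ∀ C > (0:ℝ),
      volume (Metric.closedBall (0 : EuclideanSpace ℝ (Fin n)) R \ KolmogorovSet n C ν)
        ≤ ENNReal.ofReal (k * C) := by
  set c : ℝ := 2 * (2 * R) ^ (n - 1)
  have hsum : Summable fun I : Fin n → ℤ => ‖latticePoint I‖ ^ (-((n : ℝ) + ν)) :=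
    summable_norm_latticePoint_rpow (by simpa using hν)
  refine ⟨c * ∑' I : Fin n → ℤ, ‖latticePoint I‖ ^ (-((n : ℝ) + ν)), fun C _ => ?_⟩
  have hterm : ∀ I : Fin n → ℤ, volume (⋃ _ : I ≠ 0, resonantZone n R C ν I)
      ≤ ENNReal.ofReal (c * ‖latticePoint I‖ ^ (-((n : ℝ) + ν)) * C) := by
    intro I
    rcases eq_or_ne I 0 with rfl | hI
    · simp
    · simpa [hI] using volume_resonantZone_le hR.le C ν hI
  calc volume (closedBall 0 R \ KolmogorovSet n C ν)
      ≤ ∑' I : Fin n → ℤ, volume (⋃ _ : I ≠ 0, resonantZone n R C ν I) :=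
        (measure_mono (closedBall_diff_kolmogorovSet_subset n R C ν)).trans (measure_iUnion_le _)
    _ ≤ ∑' I : Fin n → ℤ, ENNReal.ofReal (c * ‖latticePoint I‖ ^ (-((n : ℝ) + ν)) * C) :=
        ENNReal.tsum_le_tsum hterm
    _ = ENNReal.ofReal ((c * ∑' I : Fin n → ℤ, ‖latticePoint I‖ ^ (-((n : ℝ) + ν))) * C) := by
        rw [← ENNReal.ofReal_tsum_of_nonneg (fun I => by positivity)
          ((hsum.mul_left c).mul_right C), tsum_mul_right, tsum_mul_left]
end

section
/- Let h = Σ_I a_I q^I be a formal Fourier series in n variables. The Hadamard (coefficient-wise) product f ↦ h ⋆ f maps the space of holomorphic Fourier series ℂ{q,q⁻¹} into itself if and only if for every s > 0 there exists a constant C(s) such that |a_I| ≤ C(s)·e^{|I|s} for all I ∈ ℤⁿ. -/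
/-- The Euclidean norm of a lattice vector `I ∈ ℤⁿ`. -/
noncomputable def znorm {n : ℕ} (I : Fin n → ℤ) : ℝ := Real.sqrt (∑ i, ((I i : ℝ)) ^ 2)

/-- A family of Fourier coefficients defines a holomorphic Fourier series iff it
decays exponentially: `|b_I| = O(e^{-|I| t})` for some `t > 0`. -/
def IsHolFourier {n : ℕ} (b : (Fin n → ℤ) → ℂ) : Prop :=
  ∃ t > (0:ℝ), ∃ C : ℝ, ∀ I, ‖b I‖ ≤ C * Real.exp (-(znorm I) * t)

/-!
Testing against the series `e^{-|I| s}` shows that a multiplier must satisfy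
`|a_I| e^{-|I| s} = O(e^{-|I| t}) = O(1)`, i.e. `|a_I| = O(e^{|I| s})`, for every `s > 0`.
Conversely such a bound with `s = t / 2` turns a decay rate `e^{-|I| t}` of `b` into the decay
rate `e^{-|I| t / 2}` of `a ⋆ b`.
-/

open Real

lemma znorm_nonneg {n : ℕ} (I : Fin n → ℤ) : 0 ≤ znorm I := Real.sqrt_nonneg _

lemma le_mul_exp_of_mul_exp_neg_le {x C u s t : ℝ} (hx : 0 ≤ x) (hu : 0 ≤ u) (ht : 0 ≤ t)
    (h : x * exp (-u * s) ≤ C * exp (-u * t)) : x ≤ C * exp (u * s) := by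
  have hC : 0 ≤ C :=
    nonneg_of_mul_nonneg_left ((mul_nonneg hx (exp_pos _).le).trans h) (exp_pos _)
  have hdecay : exp (-u * t) ≤ 1 := exp_le_one_iff.mpr (by nlinarith)
  calc x = x * exp (-u * s) * exp (u * s) := by rw [mul_assoc, ← exp_add]; simp
    _ ≤ C * exp (-u * t) * exp (u * s) := by gcongr
    _ ≤ C * exp (u * s) := by gcongr; exact mul_le_of_le_one_right hC hdecay

lemma norm_mul_le_mul_exp {x y : ℂ} {C C' u s t : ℝ} (hx : ‖x‖ ≤ C' * exp (u * s))
    (hy : ‖y‖ ≤ C * exp (-u * t)) : ‖x * y‖ ≤ C' * C * exp (-u * (t - s)) :=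
  calc ‖x * y‖ = ‖x‖ * ‖y‖ := norm_mul x y
    _ ≤ C' * exp (u * s) * (C * exp (-u * t)) :=
      mul_le_mul hx hy (norm_nonneg y) ((norm_nonneg x).trans hx)
    _ = C' * C * exp (-u * (t - s)) := by
      rw [mul_mul_mul_comm, ← exp_add]; ring_nf

lemma isHolFourier_exp_neg_znorm {n : ℕ} {s : ℝ} (hs : 0 < s) :
    IsHolFourier (fun I : Fin n → ℤ => (exp (-znorm I * s) : ℂ)) :=
  ⟨s, hs, 1, fun I => by rw [Complex.norm_real, norm_of_nonneg (exp_pos _).le, one_mul]⟩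

lemma IsHolFourier.hadamard {n : ℕ} {a b : (Fin n → ℤ) → ℂ}
    (ha : ∀ s > (0:ℝ), ∃ C : ℝ, ∀ I, ‖a I‖ ≤ C * exp (znorm I * s)) (hb : IsHolFourier b) :
    IsHolFourier (fun I => a I * b I) := by
  obtain ⟨t, ht, C, hC⟩ := hb
  obtain ⟨C', hC'⟩ := ha (t / 2) (half_pos ht)
  refine ⟨t / 2, half_pos ht, C' * C, fun I => ?_⟩
  simpa only [sub_half] using norm_mul_le_mul_exp (hC' I) (hC I)

lemma norm_le_mul_exp_of_hadamard_isHolFourier {n : ℕ} {a : (Fin n → ℤ) → ℂ}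
    (H : ∀ b, IsHolFourier b → IsHolFourier (fun I => a I * b I)) {s : ℝ} (hs : 0 < s) :
    ∃ C : ℝ, ∀ I, ‖a I‖ ≤ C * exp (znorm I * s) := by
  obtain ⟨t, ht, C, hC⟩ := H _ (isHolFourier_exp_neg_znorm hs)
  refine ⟨C, fun I => le_mul_exp_of_mul_exp_neg_le (norm_nonneg _) (znorm_nonneg I) ht.le ?_⟩
  simpa only [norm_mul, Complex.norm_real, norm_of_nonneg (exp_pos _).le] using hC I

theorem stmt_9 {n : ℕ} (a : (Fin n → ℤ) → ℂ) :
    (∀ b, IsHolFourier b → IsHolFourier (fun I => a I * b I)) ↔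
    (∀ s > (0:ℝ), ∃ C : ℝ, ∀ I, ‖a I‖ ≤ C * Real.exp (znorm I * s)) :=
  ⟨fun H _ hs => norm_le_mul_exp_of_hadamard_isHolFourier H hs,
    fun H _ hb => hb.hadamard H⟩
end

section
/- Let K be a field of characteristic 0 and A = K[q,q⁻¹][[p]] (Laurent polynomials in q₁,…,qₙ, formal power series in p₁,…,pₙ) with Poisson bracket {pⱼ,qₖ} = qₖ δⱼₖ. If H ∈ K[[p]] has frequency vector ω = (∂H/∂p₁(0),…,∂H/∂pₙ(0)) that is non-resonant (i.e. (ω,I) ≠ 0 for all nonzero I ∈ ℤⁿ), then the kernel of the K[[p]]-linear operator {H,−} : A → A is K[[p]], and its image is the K[[p]]-submodule generated by the monomials q^I with I ≠ 0. -/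
/-- The partial derivative `∂H/∂p_i` of a formal power series `H ∈ K[[p_1,…,p_n]]`. -/
noncomputable def pDeriv {n : ℕ} (K : Type*) [Field K] (i : Fin n)
    (H : MvPowerSeries (Fin n) K) : MvPowerSeries (Fin n) K :=
  fun J => (J i + 1 : ℕ) • MvPowerSeries.coeff (J + Finsupp.single i 1) H

/-- The Hamiltonian operator `{H, -}` on `A = K[q,q⁻¹][[p]]`, where an element of
`A` is encoded as a finitely supported family over the Laurent exponents
`I ∈ ℤⁿ` with coefficients in `K[[p]]`; the Poisson bracket `{p_j,q_k} = q_k δ_{jk}`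
gives `{H, q^I g(p)} = (Σ_i I_i ∂H/∂p_i) q^I g(p)`. -/
noncomputable def hamOp {n : ℕ} (K : Type*) [Field K] (H : MvPowerSeries (Fin n) K)
    (a : (Fin n →₀ ℤ) →₀ MvPowerSeries (Fin n) K) :
    (Fin n →₀ ℤ) →₀ MvPowerSeries (Fin n) K :=
  a.sum fun I r => Finsupp.single I ((∑ i : Fin n, (I i) • pDeriv K i H) * r)

/-!
On a monomial `q^I g(p)` the operator `{H, -}` is multiplication by the power series
`Σ_i I_i ∂H/∂p_i ∈ K[[p]]`, whose constant term is `(ω, I)`. This multiplier vanishes for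
`I = 0`, and by non-resonance it is a unit of `K[[p]]` for every `I ≠ 0`. Hence `{H, -}` kills
exactly the `I = 0` component and is invertible, coefficientwise, on the other components.
-/

namespace HamOp

variable {n : ℕ} {K : Type*} [Field K] (H : MvPowerSeries (Fin n) K)

noncomputable def multiplier (I : Fin n →₀ ℤ) : MvPowerSeries (Fin n) K :=
  ∑ i : Fin n, (I i) • pDeriv K i H

/-- The pairing `(ω, I)` of the frequency vector `ω = ∇_p H(0)` with `I`. -/
noncomputable def freqPairing (I : Fin n →₀ ℤ) : K :=
  ∑ i : Fin n, (I i : K) * MvPowerSeries.coeff (Finsupp.single i 1) H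

@[simp]
lemma multiplier_zero : multiplier H 0 = 0 := by
  simp [multiplier]

lemma hamOp_apply (a : (Fin n →₀ ℤ) →₀ MvPowerSeries (Fin n) K) (J : Fin n →₀ ℤ) :
    hamOp K H a J = multiplier H J * a J := by
  classical
  rw [hamOp, Finsupp.sum_apply, Finsupp.sum, Finset.sum_eq_single J]
  · simp [multiplier]
  · intro I _ hIJ
    simp [hIJ]
  · intro hJ
    simp [Finsupp.notMem_support_iff.mp hJ]

lemma constantCoeff_pDeriv (i : Fin n) :
    MvPowerSeries.constantCoeff (pDeriv K i H) = MvPowerSeries.coeff (Finsupp.single i 1) H := by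
  change pDeriv K i H 0 = _
  simp [pDeriv]

lemma constantCoeff_multiplier (I : Fin n →₀ ℤ) :
    MvPowerSeries.constantCoeff (multiplier H I) = freqPairing H I := by
  simp only [multiplier, freqPairing, map_sum, zsmul_eq_mul, map_mul, map_intCast,
    constantCoeff_pDeriv]

lemma isUnit_multiplier {I : Fin n →₀ ℤ}
    (hI : freqPairing H I ≠ 0) :
    IsUnit (multiplier H I) := by
  rw [MvPowerSeries.isUnit_iff_constantCoeff, constantCoeff_multiplier]
  exact hI.isUnit

variable {H}

lemma hamOp_eq_zero_iff
    (hres : ∀ I : Fin n →₀ ℤ, I ≠ 0 → freqPairing H I ≠ 0)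
    (a : (Fin n →₀ ℤ) →₀ MvPowerSeries (Fin n) K) :
    hamOp K H a = 0 ↔ ∀ I : Fin n →₀ ℤ, I ≠ 0 → a I = 0 := by
  rw [Finsupp.ext_iff]
  refine forall_congr' fun I => ?_
  rw [hamOp_apply, Finsupp.coe_zero, Pi.zero_apply]
  by_cases hI : I = 0
  · simp [hI]
  · simp only [hI, ne_eq, not_false_eq_true, forall_const]
    exact (isUnit_multiplier H (hres I hI)).mul_right_eq_zero

lemma hamOp_apply_zero (a : (Fin n →₀ ℤ) →₀ MvPowerSeries (Fin n) K) :
    hamOp K H a 0 = 0 := by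
  simp [hamOp_apply]

/-- The preimage is built with `Ring.inverse`, which is `0` at the non-unit `multiplier H 0 = 0`;
that component is never needed. -/
lemma exists_hamOp_eq
    (hres : ∀ I : Fin n →₀ ℤ, I ≠ 0 → freqPairing H I ≠ 0)
    {b : (Fin n →₀ ℤ) →₀ MvPowerSeries (Fin n) K} (hb : b 0 = 0) :
    ∃ a, hamOp K H a = b := by
  refine ⟨Finsupp.onFinset b.support (fun J => Ring.inverse (multiplier H J) * b J)
    (fun J hJ => Finsupp.mem_support_iff.mpr (right_ne_zero_of_mul hJ)), ?_⟩
  ext J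
  rw [hamOp_apply, Finsupp.onFinset_apply, ← mul_assoc]
  by_cases hJ : J = 0
  · simp [hJ, hb]
  · rw [Ring.mul_inverse_cancel _ (isUnit_multiplier H (hres J hJ)), one_mul]

end HamOp

theorem stmt_14_general {n : ℕ} {K : Type*} [Field K]
    (H : MvPowerSeries (Fin n) K)
    (hres : ∀ I : Fin n →₀ ℤ, I ≠ 0 →
      (∑ i : Fin n, (I i : K) * MvPowerSeries.coeff (Finsupp.single i 1) H) ≠ 0) :
    -- the kernel of {H,-} is K[[p]], i.e. the elements supported at I = 0
    (∀ a : (Fin n →₀ ℤ) →₀ MvPowerSeries (Fin n) K,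
      hamOp K H a = 0 ↔ ∀ I : Fin n →₀ ℤ, I ≠ 0 → a I = 0) ∧
    -- the image of {H,-} is the K[[p]]-module generated by the q^I, I ≠ 0,
    -- i.e. the elements with vanishing average (zero coefficient at I = 0)
    (∀ b : (Fin n →₀ ℤ) →₀ MvPowerSeries (Fin n) K,
      (∃ a, hamOp K H a = b) ↔ b 0 = 0) :=
  ⟨HamOp.hamOp_eq_zero_iff hres, fun _ =>
    ⟨fun ⟨a, ha⟩ => ha ▸ HamOp.hamOp_apply_zero a, HamOp.exists_hamOp_eq hres⟩⟩

theorem stmt_14 {n : ℕ} {K : Type*} [Field K] [CharZero K]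
    (H : MvPowerSeries (Fin n) K)
    (hres : ∀ I : Fin n →₀ ℤ, I ≠ 0 →
      (∑ i : Fin n, (I i : K) * MvPowerSeries.coeff (Finsupp.single i 1) H) ≠ 0) :
    -- the kernel of {H,-} is K[[p]], i.e. the elements supported at I = 0
    (∀ a : (Fin n →₀ ℤ) →₀ MvPowerSeries (Fin n) K,
      hamOp K H a = 0 ↔ ∀ I : Fin n →₀ ℤ, I ≠ 0 → a I = 0) ∧
    -- the image of {H,-} is the K[[p]]-module generated by the q^I, I ≠ 0,
    -- i.e. the elements with vanishing average (zero coefficient at I = 0)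
    (∀ b : (Fin n →₀ ℤ) →₀ MvPowerSeries (Fin n) K,
      (∃ a, hamOp K H a = b) ↔ b 0 = 0) :=
  stmt_14_general H hres
end

section
/- Let E, F be Banach spaces, L : F → E a bounded linear map, and f : B_E × B_F → F a map satisfying ‖f(x,y)‖ ≤ C‖y‖² for all x in the unit ball B_E. Define the iteration (x_{n+1}, y_{n+1}) = (xₙ + L yₙ, f(xₙ, yₙ)) with x₀ = 0 and y₀ ∈ B_F such that ρ := C‖y₀‖ < 1 and (‖L‖/C)·Σ_{n≥0} ρ^{2^n} < 1. Then ‖yₙ‖ ≤ (1/C)ρ^{2^n} and ‖xₙ‖ ≤ (‖L‖/C)·Σ_{i=0}^{n-1} ρ^{2^i}; in particular (xₙ, yₙ) converges to a limit of the form (ℓ, 0). -/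
/-!
Writing `ρ = C‖y₀‖`, the quadratic estimate turns `‖yₙ‖ ≤ ρ^(2^n) / C` into
`‖yₙ₊₁‖ ≤ C‖yₙ‖² ≤ ρ^(2^(n+1)) / C`, while `xₙ = L y₀ + ⋯ + L yₙ₋₁` is bounded by the partial sums
of `(‖L‖/C) ∑ ρ^(2^i)`. The smallness assumptions keep every iterate in the unit balls, where the
estimate applies, so the induction closes. The bounds on `‖yₙ‖` are summable, hence `yₙ → 0` and
`xₙ` converges as the partial sums of the absolutely convergent series `∑ L yₙ`.
-/

open Filter Topology Finset

theorem summable_pow_two_pow {ρ : ℝ} (h0 : 0 ≤ ρ) (h1 : ρ < 1) :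
    Summable fun n : ℕ => ρ ^ 2 ^ n :=
  (summable_geometric_of_lt_one h0 h1).of_nonneg_of_le (fun _ => by positivity) fun n =>
    pow_le_pow_of_le_one h0 h1.le Nat.lt_two_pow_self.le

section QuadStep

variable {E F : Type*} [NormedAddCommGroup E] [NormedSpace ℝ E]
  [NormedAddCommGroup F] [NormedSpace ℝ F]

def quadStep (L : F →L[ℝ] E) (f : E × F → F) (p : E × F) : E × F :=
  (p.1 + L p.2, f p)

theorem quadStep_iterate_fst (L : F →L[ℝ] E) (f : E × F → F) (p : E × F) (n : ℕ) :
    ((quadStep L f)^[n] p).1 = p.1 + ∑ i ∈ range n, L ((quadStep L f)^[i] p).2 := by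
  induction n with
  | zero => simp
  | succ n ih =>
    rw [Function.iterate_succ_apply', sum_range_succ, ← add_assoc, ← ih]
    rfl

theorem tendsto_quadStep_iterate [CompleteSpace E] {L : F →L[ℝ] E} {f : E × F → F} {p : E × F}
    (h : Summable fun n => ‖((quadStep L f)^[n] p).2‖) :
    Tendsto (fun n => (quadStep L f)^[n] p) atTop
      (𝓝 (p.1 + ∑' n, L ((quadStep L f)^[n] p).2, 0)) := by
  have hLy : Summable fun n => L ((quadStep L f)^[n] p).2 :=
    (h.mul_left ‖L‖).of_norm_bounded fun n => L.le_opNorm _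
  have hfst : Tendsto (fun n => ((quadStep L f)^[n] p).1) atTop
      (𝓝 (p.1 + ∑' n, L ((quadStep L f)^[n] p).2)) := by
    simpa only [quadStep_iterate_fst] using hLy.hasSum.tendsto_sum_nat.const_add p.1
  have hsnd : Tendsto (fun n => ((quadStep L f)^[n] p).2) atTop (𝓝 0) :=
    tendsto_zero_iff_norm_tendsto_zero.mpr h.tendsto_atTop_zero
  exact hfst.prodMk_nhds hsnd

theorem quadStep_iterate_bounds {L : F →L[ℝ] E} {f : E × F → F} {C : ℝ} (hC : 0 < C)
    (hf : ∀ (x : E) (y : F), ‖x‖ ≤ 1 → ‖y‖ ≤ 1 → ‖f (x, y)‖ ≤ C * ‖y‖ ^ 2)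
    {y₀ : F} (hy₀ : ‖y₀‖ ≤ 1) (hρ : C * ‖y₀‖ ≤ 1)
    (hpartial : ∀ n, ‖L‖ / C * ∑ i ∈ range n, (C * ‖y₀‖) ^ 2 ^ i ≤ 1) (n : ℕ) :
    ‖((quadStep L f)^[n] (0, y₀)).2‖ ≤ 1 / C * (C * ‖y₀‖) ^ 2 ^ n ∧
      ‖((quadStep L f)^[n] (0, y₀)).1‖ ≤ ‖L‖ / C * ∑ i ∈ range n, (C * ‖y₀‖) ^ 2 ^ i := by
  set ρ := C * ‖y₀‖ with hρ_def
  have hρ0 : 0 ≤ ρ := by positivity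
  induction n with
  | zero => simp [ρ, hC.ne']
  | succ n ih =>
    set p := (quadStep L f)^[n] (0, y₀)
    obtain ⟨hy, hx⟩ := ih
    have hp₁ : ‖p.1‖ ≤ 1 := hx.trans (hpartial n)
    have hp₂ : ‖p.2‖ ≤ 1 := calc
      ‖p.2‖ ≤ 1 / C * ρ ^ 2 ^ n := hy
      _ ≤ 1 / C * ρ := by gcongr; exact pow_le_of_le_one hρ0 hρ (by positivity)
      _ = ‖y₀‖ := by rw [hρ_def]; field_simp
      _ ≤ 1 := hy₀
    rw [Function.iterate_succ_apply']
    constructor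
    · calc ‖f p‖ ≤ C * ‖p.2‖ ^ 2 := hf p.1 p.2 hp₁ hp₂
        _ ≤ C * (1 / C * ρ ^ 2 ^ n) ^ 2 := by gcongr
        _ = 1 / C * ρ ^ 2 ^ (n + 1) := by rw [pow_succ 2 n, pow_mul]; field_simp
    · calc ‖p.1 + L p.2‖ ≤ ‖p.1‖ + ‖L‖ * ‖p.2‖ :=
          (norm_add_le _ _).trans (add_le_add_right (L.le_opNorm _) _)
        _ ≤ ‖L‖ / C * ∑ i ∈ range n, ρ ^ 2 ^ i + ‖L‖ * (1 / C * ρ ^ 2 ^ n) := by gcongr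
        _ = ‖L‖ / C * ∑ i ∈ range (n + 1), ρ ^ 2 ^ i := by rw [sum_range_succ]; ring

end QuadStep

theorem stmt_18_general {E F : Type*} [NormedAddCommGroup E] [NormedSpace ℝ E] [CompleteSpace E]
    [NormedAddCommGroup F] [NormedSpace ℝ F]
    (L : F →L[ℝ] E) (f : E × F → F) (C : ℝ) (hC : 0 < C)
    (hf : ∀ (x : E) (y : F), ‖x‖ ≤ 1 → ‖y‖ ≤ 1 → ‖f (x, y)‖ ≤ C * ‖y‖ ^ 2)
    (y₀ : F) (hy₀ : ‖y₀‖ ≤ 1) (hρ : C * ‖y₀‖ < 1)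
    (hL : ‖L‖ / C * ∑' n : ℕ, (C * ‖y₀‖) ^ 2 ^ n < 1) :
    let step : E × F → E × F := fun p => (p.1 + L p.2, f p)
    (∀ n : ℕ, ‖(step^[n] (0, y₀)).2‖ ≤ (1 / C) * (C * ‖y₀‖) ^ 2 ^ n) ∧
    (∀ n : ℕ, ‖(step^[n] (0, y₀)).1‖ ≤ ‖L‖ / C * ∑ i ∈ Finset.range n, (C * ‖y₀‖) ^ 2 ^ i) ∧
    ∃ l : E, Filter.Tendsto (fun n => step^[n] (0, y₀)) Filter.atTop (nhds (l, 0)) := by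
  intro step
  rw [show step = quadStep L f from rfl]
  have hsum := summable_pow_two_pow (by positivity) hρ
  have hbounds := quadStep_iterate_bounds hC hf hy₀ hρ.le fun n =>
    (mul_le_mul_of_nonneg_left (hsum.sum_le_tsum _ fun i _ => by positivity) (by positivity)).trans
      hL.le
  refine ⟨fun n => (hbounds n).1, fun n => (hbounds n).2, _, tendsto_quadStep_iterate ?_⟩
  exact (hsum.mul_left (1 / C)).of_nonneg_of_le (fun _ => norm_nonneg _) fun n => (hbounds n).1

theorem stmt_18 {E F : Type*} [NormedAddCommGroup E] [NormedSpace ℝ E] [CompleteSpace E]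
    [NormedAddCommGroup F] [NormedSpace ℝ F] [CompleteSpace F]
    (L : F →L[ℝ] E) (f : E × F → F) (C : ℝ) (hC : 0 < C)
    (hf : ∀ (x : E) (y : F), ‖x‖ ≤ 1 → ‖y‖ ≤ 1 → ‖f (x, y)‖ ≤ C * ‖y‖ ^ 2)
    (y₀ : F) (hy₀ : ‖y₀‖ ≤ 1) (hρ : C * ‖y₀‖ < 1)
    (hL : ‖L‖ / C * ∑' n : ℕ, (C * ‖y₀‖) ^ 2 ^ n < 1) :
    let step : E × F → E × F := fun p => (p.1 + L p.2, f p)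
    (∀ n : ℕ, ‖(step^[n] (0, y₀)).2‖ ≤ (1 / C) * (C * ‖y₀‖) ^ 2 ^ n) ∧
    (∀ n : ℕ, ‖(step^[n] (0, y₀)).1‖ ≤ ‖L‖ / C * ∑ i ∈ Finset.range n, (C * ‖y₀‖) ^ 2 ^ i) ∧
    ∃ l : E, Filter.Tendsto (fun n => step^[n] (0, y₀)) Filter.atTop (nhds (l, 0)) :=
  stmt_18_general L f C hC hf y₀ hy₀ hρ hL
end

section
/- Let ω = (1, α) where α = Σ_{j≥0} 10^{-j!}, and let βₖ = (Σ_{j=0}^{k} 10^{k!-j!}, 10^{k!}) ∈ ℤ². Then (ω, βₖ) = 10^{k!}·Σ_{j≥k+1} 10^{-j!}, and for any ν > 0 the sequence (ω,βₖ)·‖βₖ‖^{1+ν} converges to 0 as k → ∞. -/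
/-- The Liouville constant `α = Σ_{j≥0} 10^{-j!}`. -/
noncomputable def liouvilleAlpha : ℝ := ∑' j : ℕ, (1 / 10 : ℝ) ^ (Nat.factorial j)

lemma summable_liouville : Summable (fun j : ℕ => (1/10 : ℝ) ^ (Nat.factorial j)) := by
  apply Summable.of_nonneg_of_le (fun j => by positivity) (fun j => ?_)
    (summable_geometric_of_lt_one (by norm_num) (by norm_num : (1/10:ℝ) < 1))
  exact pow_le_pow_of_le_one (by norm_num) (by norm_num) (Nat.self_le_factorial j)

lemma liouville_part1 (k : ℕ) :
    (10:ℝ) ^ (Nat.factorial k) * liouvilleAlpha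
        - ∑ j ∈ Finset.range (k + 1), (10:ℝ) ^ (Nat.factorial k - Nat.factorial j)
      = (10:ℝ) ^ (Nat.factorial k) * ∑' j : ℕ, (1 / 10 : ℝ) ^ (Nat.factorial (j + k + 1)) := by
  have hsplit := Summable.sum_add_tsum_nat_add (f := fun j : ℕ => (1/10 : ℝ) ^ (Nat.factorial j))
    (k+1) summable_liouville
  have hα : liouvilleAlpha = ∑ j ∈ Finset.range (k+1), (1/10:ℝ) ^ (Nat.factorial j)
      + ∑' j : ℕ, (1/10:ℝ) ^ (Nat.factorial (j + k + 1)) := by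
    rw [liouvilleAlpha, ← hsplit]
    norm_num [Nat.add_assoc]
  have hterm : ∀ j ∈ Finset.range (k+1),
      (10:ℝ) ^ (Nat.factorial k) * (1/10:ℝ) ^ (Nat.factorial j)
        = (10:ℝ) ^ (Nat.factorial k - Nat.factorial j) := by
    intro j hj
    have hle : Nat.factorial j ≤ Nat.factorial k :=
      Nat.factorial_le (Nat.lt_succ_iff.mp (Finset.mem_range.mp hj))
    rw [pow_sub₀ (10:ℝ) (by norm_num) hle, one_div, inv_pow]
  rw [hα, mul_add, Finset.mul_sum, Finset.sum_congr rfl hterm]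
  ring

lemma add_fact_le (m j : ℕ) (hm : 1 ≤ m) : Nat.factorial m + j ≤ Nat.factorial (j + m) := by
  induction j with
  | zero => simp
  | succ n ih =>
      have h1 : Nat.factorial (n + m) + 1 ≤ Nat.factorial (n + 1 + m) := by
        have : Nat.factorial (n + 1 + m) = (n + m + 1) * Nat.factorial (n + m) := by
          rw [show n + 1 + m = (n + m) + 1 by omega, Nat.factorial_succ]
        rw [this]
        nlinarith [Nat.one_le_iff_ne_zero.mpr (Nat.factorial_ne_zero (n + m)), hm]
      omega

lemma summable_tail (k : ℕ) :
    Summable (fun j : ℕ => (1/10:ℝ) ^ (Nat.factorial (j + k + 1))) := by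
  apply Summable.of_nonneg_of_le (fun j => by positivity) (fun j => ?_)
    (summable_geometric_of_lt_one (by norm_num) (by norm_num : (1/10:ℝ) < 1))
  apply pow_le_pow_of_le_one (by norm_num) (by norm_num)
  exact le_trans (by omega) (Nat.self_le_factorial (j + k + 1))

lemma tail_le (k : ℕ) : (∑' j : ℕ, (1/10:ℝ) ^ (Nat.factorial (j + k + 1)))
    ≤ 2 * (1/10:ℝ) ^ (Nat.factorial (k+1)) := by
  have h1 : (∑' j : ℕ, (1/10:ℝ) ^ (Nat.factorial (j + k + 1)))
      ≤ ∑' j : ℕ, (1/10:ℝ) ^ (Nat.factorial (k+1)) * (1/10:ℝ) ^ j := by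
    apply Summable.tsum_le_tsum _ (summable_tail k)
    · exact (summable_geometric_of_lt_one (by norm_num) (by norm_num)).mul_left _
    · intro j
      rw [← pow_add]
      apply pow_le_pow_of_le_one (by norm_num) (by norm_num)
      exact add_fact_le (k+1) j (by omega)
  have h2 : (∑' j : ℕ, (1/10:ℝ) ^ (Nat.factorial (k+1)) * (1/10:ℝ) ^ j)
      = (1/10:ℝ) ^ (Nat.factorial (k+1)) * (1 - 1/10)⁻¹ := by
    rw [tsum_mul_left, tsum_geometric_of_lt_one (by norm_num) (by norm_num)]
  calc _ ≤ _ := h1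
    _ = _ := h2
    _ ≤ 2 * (1/10:ℝ) ^ (Nat.factorial (k+1)) := by
        rw [mul_comm]
        gcongr
        norm_num

lemma A_nonneg (k : ℕ) : 0 ≤ (10:ℝ) ^ (Nat.factorial k) * liouvilleAlpha
    - ∑ j ∈ Finset.range (k + 1), (10:ℝ) ^ (Nat.factorial k - Nat.factorial j) := by
  rw [liouville_part1 k]
  have : (0:ℝ) ≤ ∑' j : ℕ, (1/10:ℝ) ^ (Nat.factorial (j + k + 1)) := tsum_nonneg (fun j : ℕ => by positivity :
    ∀ j : ℕ, (0:ℝ) ≤ (1/10:ℝ) ^ (Nat.factorial (j + k + 1)))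
  positivity

lemma A_le (k : ℕ) : (10:ℝ) ^ (Nat.factorial k) * liouvilleAlpha
    - ∑ j ∈ Finset.range (k + 1), (10:ℝ) ^ (Nat.factorial k - Nat.factorial j)
    ≤ 2 * (1/10:ℝ) ^ (k * Nat.factorial k) := by
  rw [liouville_part1 k]
  calc (10:ℝ) ^ (Nat.factorial k) * ∑' j : ℕ, (1/10:ℝ) ^ (Nat.factorial (j + k + 1))
      ≤ (10:ℝ) ^ (Nat.factorial k) * (2 * (1/10:ℝ) ^ (Nat.factorial (k+1))) := by
        gcongr
        exact tail_le k
    _ = 2 * (1/10:ℝ) ^ (k * Nat.factorial k) := by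
        have h : Nat.factorial (k+1) = Nat.factorial k + k * Nat.factorial k := by
          rw [Nat.factorial_succ]; ring
        rw [h, pow_add]
        rw [show ((1:ℝ)/10) ^ Nat.factorial k = ((10:ℝ) ^ Nat.factorial k)⁻¹ by
          rw [one_div, inv_pow]]
        have h10 : ((10:ℝ) ^ Nat.factorial k) ≠ 0 := by positivity
        field_simp

lemma X_le (k : ℕ) : Real.sqrt
      ((∑ j ∈ Finset.range (k + 1), (10:ℝ) ^ (Nat.factorial k - Nat.factorial j)) ^ 2
        + ((10:ℝ) ^ (Nat.factorial k)) ^ 2)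
    ≤ (10:ℝ) ^ (Nat.factorial k + k + 1) := by
  have hS_nonneg : (0:ℝ) ≤ ∑ j ∈ Finset.range (k + 1),
      (10:ℝ) ^ (Nat.factorial k - Nat.factorial j) := by positivity
  have hS : (∑ j ∈ Finset.range (k + 1), (10:ℝ) ^ (Nat.factorial k - Nat.factorial j))
      ≤ (k+1 : ℝ) * (10:ℝ) ^ (Nat.factorial k) := by
    calc _ ≤ ∑ j ∈ Finset.range (k + 1), (10:ℝ) ^ (Nat.factorial k) := by
            apply Finset.sum_le_sum
            intro j _
            exact pow_le_pow_right₀ (by norm_num) (Nat.sub_le _ _)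
      _ = (k+1 : ℝ) * (10:ℝ) ^ (Nat.factorial k) := by
            rw [Finset.sum_const, Finset.card_range]; norm_num
  have hsum_le : Real.sqrt
      ((∑ j ∈ Finset.range (k + 1), (10:ℝ) ^ (Nat.factorial k - Nat.factorial j)) ^ 2
        + ((10:ℝ) ^ (Nat.factorial k)) ^ 2)
      ≤ (∑ j ∈ Finset.range (k + 1),
        (10:ℝ) ^ (Nat.factorial k - Nat.factorial j)) + (10:ℝ) ^ (Nat.factorial k) := by
    have h := Real.sqrt_le_sqrt (show
        (∑ j ∈ Finset.range (k + 1), (10:ℝ) ^ (Nat.factorial k - Nat.factorial j)) ^ 2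
          + ((10:ℝ) ^ (Nat.factorial k)) ^ 2
        ≤ ((∑ j ∈ Finset.range (k + 1), (10:ℝ) ^ (Nat.factorial k - Nat.factorial j))
          + (10:ℝ) ^ (Nat.factorial k)) ^ 2 by
        nlinarith [hS_nonneg, pow_nonneg (by norm_num : (0:ℝ) ≤ 10) (Nat.factorial k)])
    rwa [Real.sqrt_sq (by positivity)] at h
  have hk2 : (k + 2 : ℝ) ≤ (10:ℝ) ^ (k+1) := by
    have h := Nat.lt_pow_self (a := 10) (n := k+1) (by norm_num)
    calc (k + 2 : ℝ) = ((k + 2 : ℕ) : ℝ) := by push_cast; ring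
      _ ≤ ((10 ^ (k+1) : ℕ) : ℝ) := by exact_mod_cast h
      _ = (10:ℝ) ^ (k+1) := by push_cast; ring
  calc Real.sqrt _ ≤ _ := hsum_le
    _ ≤ (k+1 : ℝ) * (10:ℝ) ^ (Nat.factorial k) + (10:ℝ) ^ (Nat.factorial k) := by gcongr
    _ = (k + 2 : ℝ) * (10:ℝ) ^ (Nat.factorial k) := by ring
    _ ≤ (10:ℝ) ^ (k+1) * (10:ℝ) ^ (Nat.factorial k) := by gcongr
    _ = (10:ℝ) ^ (Nat.factorial k + k + 1) := by rw [← pow_add]; ring_nf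

lemma rpow_neg_nat (n : ℕ) : (10:ℝ) ^ (-(n:ℝ)) = (1/10:ℝ) ^ n := by
  rw [Real.rpow_neg (by norm_num), Real.rpow_natCast, one_div, inv_pow]

lemma key_bound (ν : ℝ) (hν : 0 < ν) (k : ℕ) (hk : 3 * (1 + ν) + 1 ≤ (k:ℝ)) :
    ((10:ℝ) ^ (Nat.factorial k) * liouvilleAlpha
      - ∑ j ∈ Finset.range (k + 1), (10:ℝ) ^ (Nat.factorial k - Nat.factorial j))
    * (Real.sqrt
        ((∑ j ∈ Finset.range (k + 1), (10:ℝ) ^ (Nat.factorial k - Nat.factorial j)) ^ 2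
          + ((10:ℝ) ^ (Nat.factorial k)) ^ 2)) ^ ((1:ℝ) + ν)
    ≤ 2 * (1/10:ℝ) ^ k := by
  have h1ν : (0:ℝ) ≤ 1 + ν := by linarith
  have hXnn : (0:ℝ) ≤ Real.sqrt
      ((∑ j ∈ Finset.range (k + 1), (10:ℝ) ^ (Nat.factorial k - Nat.factorial j)) ^ 2
        + ((10:ℝ) ^ (Nat.factorial k)) ^ 2) := Real.sqrt_nonneg _
  have hXpow : (Real.sqrt
      ((∑ j ∈ Finset.range (k + 1), (10:ℝ) ^ (Nat.factorial k - Nat.factorial j)) ^ 2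
        + ((10:ℝ) ^ (Nat.factorial k)) ^ 2)) ^ ((1:ℝ) + ν)
      ≤ (10:ℝ) ^ (((Nat.factorial k + k + 1 : ℕ) : ℝ) * (1 + ν)) := by
    calc _ ≤ ((10:ℝ) ^ (Nat.factorial k + k + 1)) ^ ((1:ℝ) + ν) :=
          Real.rpow_le_rpow hXnn (X_le k) h1ν
      _ = (10:ℝ) ^ (((Nat.factorial k + k + 1 : ℕ) : ℝ) * (1 + ν)) := by
          rw [← Real.rpow_natCast (10:ℝ) (Nat.factorial k + k + 1),
            ← Real.rpow_mul (by norm_num)]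
  have hApow : (10:ℝ) ^ (Nat.factorial k) * liouvilleAlpha
      - ∑ j ∈ Finset.range (k + 1), (10:ℝ) ^ (Nat.factorial k - Nat.factorial j)
      ≤ 2 * (10:ℝ) ^ (-(((k * Nat.factorial k : ℕ) : ℝ))) := by
    rw [rpow_neg_nat]
    exact A_le k
  have hbound : ((10:ℝ) ^ (Nat.factorial k) * liouvilleAlpha
      - ∑ j ∈ Finset.range (k + 1), (10:ℝ) ^ (Nat.factorial k - Nat.factorial j))
      * (Real.sqrt
        ((∑ j ∈ Finset.range (k + 1), (10:ℝ) ^ (Nat.factorial k - Nat.factorial j)) ^ 2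
          + ((10:ℝ) ^ (Nat.factorial k)) ^ 2)) ^ ((1:ℝ) + ν)
      ≤ 2 * (10:ℝ) ^ (-(((k * Nat.factorial k : ℕ) : ℝ))
          + ((Nat.factorial k + k + 1 : ℕ) : ℝ) * (1 + ν)) := by
    have h10 : (10:ℝ) ^ (-(((k * Nat.factorial k : ℕ) : ℝ)))
        * (10:ℝ) ^ (((Nat.factorial k + k + 1 : ℕ) : ℝ) * (1 + ν))
        = (10:ℝ) ^ (-(((k * Nat.factorial k : ℕ) : ℝ))
          + ((Nat.factorial k + k + 1 : ℕ) : ℝ) * (1 + ν)) :=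
      (Real.rpow_add (by norm_num) _ _).symm
    have hm := mul_le_mul hApow hXpow (Real.rpow_nonneg hXnn _)
      (by positivity)
    calc _ ≤ (2 * (10:ℝ) ^ (-(((k * Nat.factorial k : ℕ) : ℝ))))
        * ((10:ℝ) ^ (((Nat.factorial k + k + 1 : ℕ) : ℝ) * (1 + ν))) := hm
      _ = 2 * ((10:ℝ) ^ (-(((k * Nat.factorial k : ℕ) : ℝ)))
          * (10:ℝ) ^ (((Nat.factorial k + k + 1 : ℕ) : ℝ) * (1 + ν))) := by ring
      _ = _ := by rw [h10]
  have hexp : -(((k * Nat.factorial k : ℕ) : ℝ))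
      + ((Nat.factorial k + k + 1 : ℕ) : ℝ) * (1 + ν) ≤ -(k:ℝ) := by
    have hfk : (1:ℝ) ≤ (Nat.factorial k : ℝ) := by
      exact_mod_cast Nat.one_le_iff_ne_zero.mpr (Nat.factorial_ne_zero k)
    have hkf : (k:ℝ) ≤ (Nat.factorial k : ℝ) := by
      exact_mod_cast Nat.self_le_factorial k
    have h3 : ((Nat.factorial k + k + 1 : ℕ) : ℝ) ≤ 3 * (Nat.factorial k : ℝ) := by
      push_cast
      linarith
    have hmul : ((Nat.factorial k + k + 1 : ℕ) : ℝ) * (1 + ν)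
        ≤ 3 * (Nat.factorial k : ℝ) * (1 + ν) :=
      mul_le_mul_of_nonneg_right h3 h1ν
    push_cast at hmul ⊢
    nlinarith
  calc _ ≤ _ := hbound
    _ ≤ 2 * (10:ℝ) ^ (-(k:ℝ)) := by
        have := Real.rpow_le_rpow_of_exponent_le (x := (10:ℝ)) (by norm_num) hexp
        linarith
    _ = 2 * (1/10:ℝ) ^ k := by rw [rpow_neg_nat]

theorem stmt_19 :
    -- (ω, βₖ) = 10^{k!} Σ_{j ≥ k+1} 10^{-j!} for βₖ = (-Σ_{j≤k} 10^{k!-j!}, 10^{k!})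
    (∀ k : ℕ, (10:ℝ) ^ (Nat.factorial k) * liouvilleAlpha
        - ∑ j ∈ Finset.range (k + 1), (10:ℝ) ^ (Nat.factorial k - Nat.factorial j)
      = (10:ℝ) ^ (Nat.factorial k) * ∑' j : ℕ, (1 / 10 : ℝ) ^ (Nat.factorial (j + k + 1))) ∧
    -- (ω, βₖ) · ‖βₖ‖^{1+ν} → 0 for every ν > 0
    (∀ ν > (0:ℝ), Filter.Tendsto (fun k : ℕ =>
        ((10:ℝ) ^ (Nat.factorial k) * liouvilleAlpha
          - ∑ j ∈ Finset.range (k + 1), (10:ℝ) ^ (Nat.factorial k - Nat.factorial j))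
        * (Real.sqrt
            ((∑ j ∈ Finset.range (k + 1), (10:ℝ) ^ (Nat.factorial k - Nat.factorial j)) ^ 2
              + ((10:ℝ) ^ (Nat.factorial k)) ^ 2)) ^ ((1:ℝ) + ν))
      Filter.atTop (nhds 0)) := by
  refine ⟨liouville_part1, ?_⟩
  intro ν hν
  apply squeeze_zero' (g := fun k : ℕ => 2 * (1/10:ℝ) ^ k)
  · filter_upwards with k
    exact mul_nonneg (A_nonneg k) (Real.rpow_nonneg (Real.sqrt_nonneg _) _)
  · obtain ⟨N, hN⟩ := exists_nat_ge ((3:ℝ) * (1 + ν) + 1)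
    filter_upwards [Filter.eventually_ge_atTop N] with k hk
    exact key_bound ν hν k (le_trans hN (by exact_mod_cast hk))
  · have h := tendsto_pow_atTop_nhds_zero_of_lt_one
      (r := (1/10:ℝ)) (by norm_num) (by norm_num)
    simpa using h.const_mul 2
end
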